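/- Let a ∈ B^n be a crossingless matching containing the pair (i, i+1), and let a' ∈ B^{n−1} be the crossingless matching obtained from a by removing the pair (i, i+1) and renumbering each j ≥ i+2 to j−2. Then K_a = q_{2n,i}^{−1}(K_{a'}) as subsets of X_{2n,i}; in particular K_a ⊆ X_{2n,i}. -/

import Mathlib

open scoped ComplexInnerProductSpace

noncomputable section

abbrev E (N : ℕ) := EuclideanSpace ℂ (Fin N ⊕ Fin N)

def zmap (N : ℕ) : E N →ₗ[ℂ] E N where
  toFun v := WithLp.toLp 2 fun i =>
    match i with
    | Sum.inl j => if h : (j : ℕ) + 1 < N then v (Sum.inl ⟨(j : ℕ) + 1, h⟩) else 0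
    | Sum.inr j => if h : (j : ℕ) + 1 < N then v (Sum.inr ⟨(j : ℕ) + 1, h⟩) else 0
  map_add' u v := by
    ext i
    rcases i with j | j <;> simp only [PiLp.add_apply, PiLp.toLp_apply] <;> split <;> simp
  map_smul' c v := by
    ext i
    rcases i with j | j <;> simp only [PiLp.smul_apply, PiLp.toLp_apply, RingHom.id_apply, smul_eq_mul] <;>
      split <;> simp

def Cmap (N : ℕ) : E N →ₗ[ℂ] EuclideanSpace ℂ (Fin 2) where
  toFun v := WithLp.toLp 2 fun i => if i = 0 then ∑ j : Fin N, v (Sum.inl j) else ∑ j : Fin N, v (Sum.inr j)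
  map_add' u v := by
    ext i
    by_cases h : i = (0 : Fin 2) <;> simp [h, PiLp.add_apply, Finset.sum_add_distrib]
  map_smul' c v := by
    ext i
    by_cases h : i = (0 : Fin 2) <;> simp [h, PiLp.smul_apply, Finset.mul_sum]

/-- `Ym N m` : complete flags `0 = L_0 ⊊ L_1 ⊊ … ⊊ L_m` of `z`-stable subspaces of `E`
with `dim L_j = j`.  A tuple `(L_1,…,L_m) ∈ Y_m` is encoded as the function
`L : Fin (m+1) → Submodule ℂ (E N)` with the convention `L 0 = 0`. -/
def Ym (N m : ℕ) : Set (Fin (m + 1) → Submodule ℂ (E N)) :=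
  {L | L 0 = ⊥ ∧ StrictMono L ∧ (∀ j : Fin (m + 1), Module.finrank ℂ (L j) = (j : ℕ)) ∧
    ∀ j : Fin (m + 1), (L j).map (zmap N) ≤ L j}

/-- The map `φ_m`, in coordinates: `φ_m(L)_j = C(L_{j+1} ∩ L_j^⊥)` (0-based `j`),
i.e. the tuple `(C(L_1), C(L_2 ∩ L_1^⊥), …, C(L_m ∩ L_{m-1}^⊥))`. -/
def phiRaw (N m : ℕ) (L : Fin (m + 1) → Submodule ℂ (E N)) :
    Fin m → Submodule ℂ (EuclideanSpace ℂ (Fin 2)) :=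
  fun j => ((L j.succ) ⊓ (L j.castSucc)ᗮ).map (Cmap N)

/-- `X_{m,i} = {(L_1,…,L_m) ∈ Y_m : L_{i+1} = z^{-1}(L_{i-1})}` (with `L_0 = 0`). -/
def Xmi (N m i : ℕ) : Set (Fin (m + 1) → Submodule ℂ (E N)) :=
  {L | L ∈ Ym N m ∧ ∀ (h : i + 1 < m + 1) (h' : i - 1 < m + 1),
    L ⟨i + 1, h⟩ = (L ⟨i - 1, h'⟩).comap (zmap N)}

/-- `A_{m,i} = {(l_1,…,l_m) ∈ (ℙ¹)^m : l_{i+1} = l_i^⊥}`; a point of `(ℙ¹)^m` is encoded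
as a tuple of rank-one subspaces of `ℂ²`, the line `l_k` sitting at 0-based index `k-1`. -/
def Ami (m i : ℕ) : Set (Fin m → Submodule ℂ (EuclideanSpace ℂ (Fin 2))) :=
  {l | (∀ j, Module.finrank ℂ (l j) = 1) ∧
    ∀ (h : i < m) (h' : i - 1 < m), l ⟨i, h⟩ = (l ⟨i - 1, h'⟩)ᗮ}

/-- `q_{m,i}(L_1,…,L_m) = (L_1,…,L_{i-1}, zL_{i+2},…,zL_m)`. -/
def qRaw (N m i : ℕ) (hm : 2 ≤ m) (L : Fin (m + 1) → Submodule ℂ (E N)) :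
    Fin (m - 2 + 1) → Submodule ℂ (E N) :=
  fun j =>
    if (j : ℕ) < i then L ⟨(j : ℕ), by have := j.isLt; omega⟩
    else (L ⟨(j : ℕ) + 2, by have := j.isLt; omega⟩).map (zmap N)

/-- The forgetful map `g_{m,i}(l_1,…,l_m) = (l_1,…,l_{i-1}, l_{i+2},…,l_m)`. -/
def gRaw (m i : ℕ) (l : Fin m → Submodule ℂ (EuclideanSpace ℂ (Fin 2))) :
    Fin (m - 2) → Submodule ℂ (EuclideanSpace ℂ (Fin 2)) :=
  fun k =>
    if (k : ℕ) + 1 < i then l ⟨(k : ℕ), by have := k.isLt; omega⟩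
    else l ⟨(k : ℕ) + 2, by have := k.isLt; omega⟩

/-- The involution `I_{2n}` of `(ℙ¹)^m`: `l_j ↦ l_j` for `j` odd, `l_j ↦ l_j^⊥` for `j` even
(the line `l_j` sits at 0-based index `j-1`). -/
def Imap (m : ℕ) (l : Fin m → Submodule ℂ (EuclideanSpace ℂ (Fin 2))) :
    Fin m → Submodule ℂ (EuclideanSpace ℂ (Fin 2)) :=
  fun k => if (k : ℕ) % 2 = 0 then l k else (l k)ᗮ

/-- A crossingless matching of the `2n` points `{1,…,2n}`: a partition of `{1,…,2n}` into
`n` pairs (each pair recorded as `(i,j)` with `i < j`) such that there is no quadruple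
`i < j < k < l` with `(i,k)` and `(j,l)` paired. -/
structure CrossinglessMatching (n : ℕ) where
  pairs : Finset (ℕ × ℕ)
  card_eq : pairs.card = n
  lt : ∀ p ∈ pairs, p.1 < p.2
  mem_range : ∀ p ∈ pairs, 1 ≤ p.1 ∧ p.2 ≤ 2 * n
  cover : ∀ k, 1 ≤ k → k ≤ 2 * n → ∃! p, p ∈ pairs ∧ (p.1 = k ∨ p.2 = k)
  noncross : ∀ i j k l : ℕ, i < j → j < k → k < l → (i, k) ∈ pairs → (j, l) ∉ pairs

/-- `{(L_1,…,L_m) ∈ Y_m : L_{s_a(j)} = z^{-d_a(j)} L_{j-1} for all j ∈ O_a}`, where for a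
pair `(i,j)` of the matching, `s_a(i) = j`, `d_a(i) = (j-i+1)/2`, and `z^{-d}` is the
`d`-fold preimage under `z`. -/
def KaSet (N m : ℕ) (pairs : Finset (ℕ × ℕ)) : Set (Fin (m + 1) → Submodule ℂ (E N)) :=
  {L | L ∈ Ym N m ∧ ∀ p ∈ pairs,
    L (Fin.ofNat (m + 1) p.2) =
      (L (Fin.ofNat (m + 1) (p.1 - 1 : ℕ))).comap ((zmap N) ^ ((p.2 - p.1 + 1) / 2))}

/-- `S_a = {(l_1,…,l_{2n}) ∈ (ℙ¹)^{2n} : l_{s_a(j)} = l_j ∀ j ∈ O_a}` (0-based indexing, so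
`l_k` sits at index `k-1`). -/
def SaSet (m : ℕ) (pairs : Finset (ℕ × ℕ)) :
    Set (Fin m → Submodule ℂ (EuclideanSpace ℂ (Fin 2))) :=
  {l | (∀ j, Module.finrank ℂ (l j) = 1) ∧
    ∀ p ∈ pairs, ∀ (h2 : p.2 - 1 < m) (h1 : p.1 - 1 < m), l ⟨p.2 - 1, h2⟩ = l ⟨p.1 - 1, h1⟩}

/-- `T_a = {(l_1,…,l_{2n}) ∈ (ℙ¹)^{2n} : l_{s_a(j)} = l_j^⊥ ∀ j ∈ O_a}`. -/
def TaSet (m : ℕ) (pairs : Finset (ℕ × ℕ)) :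
    Set (Fin m → Submodule ℂ (EuclideanSpace ℂ (Fin 2))) :=
  {l | (∀ j, Module.finrank ℂ (l j) = 1) ∧
    ∀ p ∈ pairs, ∀ (h2 : p.2 - 1 < m) (h1 : p.1 - 1 < m), l ⟨p.2 - 1, h2⟩ = (l ⟨p.1 - 1, h1⟩)ᗮ}

/-! On `X_{2n,i}` the two-dimensional kernel of `z` lies in every `L_k` with `k ≥ i + 1` and
`z L_{i+1} = L_{i-1}`; hence `q_{2n,i}(L)` is again a flag. A pair of `a` other than `(i, i+1)`
lies to the left of, around, or to the right of `{i, i+1}`, and its condition on `L` becomes the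
condition of the renumbered pair on `q_{2n,i}(L)` by one of two facts about subspaces
`V ⊇ ker z` with `dim V ≥ dim W + 2d`: `V = z^{-(d+1)} W ↔ zV = z^{-d} W`, and, when also
`W ⊇ ker z`, `V = z^{-d} W ↔ zV = z^{-d}(zW)`. In each direction one containment is formal, and
equality follows from the dimension bound `dim z^{-d} U ≤ dim U + d · dim ker z`. -/

namespace Submodule

open Module LinearMap

variable {K M : Type*} [DivisionRing K] [AddCommGroup M] [Module K M] [FiniteDimensional K M]
  (f : Module.End K M)

theorem finrank_map_add_finrank_ker_of_ker_le {W : Submodule K M} (hW : ker f ≤ W) :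
    finrank K (W.map f) + finrank K (ker f) = finrank K W := by
  have h := finrank_range_add_finrank_ker (f.domRestrict W)
  rwa [range_domRestrict, ker_domRestrict, (comapSubtypeEquivOfLe hW).finrank_eq] at h

theorem finrank_comap_le (U : Submodule K M) :
    finrank K (U.comap f) ≤ finrank K U + finrank K (ker f) := by
  have h := finrank_map_add_finrank_ker_of_ker_le f (ker_le_comap (p := U) f)
  have := finrank_mono (map_comap_le f U)
  omega

theorem finrank_comap_pow_le (U : Submodule K M) (d : ℕ) :
    finrank K (U.comap (f ^ d)) ≤ finrank K U + d * finrank K (ker f) := by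
  induction d with
  | zero => rw [pow_zero, Module.End.one_eq_id, comap_id, zero_mul, add_zero]
  | succ d ih =>
    rw [pow_succ, Module.End.mul_eq_comp, comap_comp]
    have := finrank_comap_le f (U.comap (f ^ d))
    rw [add_one_mul]
    omega

variable {f}

theorem eq_comap_pow_succ_iff_map_eq {V W : Submodule K M} (hV : ker f ≤ V) (d : ℕ)
    (hdim : finrank K W + (d + 1) * finrank K (ker f) ≤ finrank K V) :
    V = W.comap (f ^ (d + 1)) ↔ V.map f = W.comap (f ^ d) := by
  have hrank := finrank_map_add_finrank_ker_of_ker_le f hV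
  have hcomp : f ^ (d + 1) = (f ^ d).comp f := by rw [pow_succ, Module.End.mul_eq_comp]
  constructor
  · intro h
    refine eq_of_le_of_finrank_le ?_ ?_
    · rw [map_le_iff_le_comap, ← comap_comp, ← hcomp, h]
    · have := finrank_comap_pow_le f W d
      rw [add_one_mul] at hdim
      omega
  · intro h
    refine eq_of_le_of_finrank_le ?_ ?_
    · calc V ≤ (V.map f).comap f := le_comap_map f V
        _ = W.comap (f ^ (d + 1)) := by rw [h, hcomp, comap_comp]
    · have := finrank_comap_pow_le f W (d + 1)
      omega

theorem eq_comap_pow_iff_map_eq_comap_pow_map {V W : Submodule K M} (hV : ker f ≤ V)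
    (hW : ker f ≤ W) (d : ℕ) (hdim : finrank K W + d * finrank K (ker f) ≤ finrank K V) :
    V = W.comap (f ^ d) ↔ V.map f = (W.map f).comap (f ^ d) := by
  have hrankV := finrank_map_add_finrank_ker_of_ker_le f hV
  have hrankW := finrank_map_add_finrank_ker_of_ker_le f hW
  have hcomm : (f ^ d).comp f = f.comp (f ^ d) := by
    rw [← Module.End.mul_eq_comp, ← Module.End.mul_eq_comp, pow_mul_comm']
  have hcomap : ((W.map f).comap (f ^ d)).comap f = W.comap (f ^ d) := by
    rw [← comap_comp, hcomm, comap_comp, comap_map_eq, sup_eq_left.mpr hW]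
  constructor
  · intro h
    refine eq_of_le_of_finrank_le ?_ ?_
    · rw [map_le_iff_le_comap, hcomap, h]
    · have := finrank_comap_pow_le f (W.map f) d
      omega
  · intro h
    refine eq_of_le_of_finrank_le ?_ ?_
    · calc V ≤ (V.map f).comap f := le_comap_map f V
        _ = W.comap (f ^ d) := by rw [h, hcomap]
    · have := finrank_comap_pow_le f W d
      omega

end Submodule

open Module

theorem zmap_apply_inl {N : ℕ} (v : E N) (j : Fin N) :
    zmap N v (Sum.inl j) = if h : (j : ℕ) + 1 < N then v (Sum.inl ⟨j + 1, h⟩) else 0 := rfl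

theorem zmap_apply_inr {N : ℕ} (v : E N) (j : Fin N) :
    zmap N v (Sum.inr j) = if h : (j : ℕ) + 1 < N then v (Sum.inr ⟨j + 1, h⟩) else 0 := rfl

theorem mem_ker_zmap_iff {N : ℕ} (v : E N) :
    v ∈ LinearMap.ker (zmap N) ↔
      ∀ j : Fin N, 0 < (j : ℕ) → v (Sum.inl j) = 0 ∧ v (Sum.inr j) = 0 := by
  rw [LinearMap.mem_ker]
  constructor
  · intro h j hj
    have hj' : (j : ℕ) - 1 + 1 < N := by omega
    have hjj : (⟨(j : ℕ) - 1 + 1, hj'⟩ : Fin N) = j := Fin.ext (by simp only; omega)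
    have hl := congrArg (· (Sum.inl ⟨(j : ℕ) - 1, by omega⟩)) h
    have hr := congrArg (· (Sum.inr ⟨(j : ℕ) - 1, by omega⟩)) h
    simp only [zmap_apply_inl, zmap_apply_inr, dif_pos hj', hjj] at hl hr
    exact ⟨hl, hr⟩
  · intro h
    ext (j | j)
    · rw [zmap_apply_inl]
      split_ifs
      exacts [(h _ (Nat.succ_pos _)).1, rfl]
    · rw [zmap_apply_inr]
      split_ifs
      exacts [(h _ (Nat.succ_pos _)).2, rfl]

theorem finrank_ker_zmap {N : ℕ} (hN : 1 ≤ N) : finrank ℂ (LinearMap.ker (zmap N)) = 2 := by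
  set j₀ : Fin N := ⟨0, hN⟩
  let ev : LinearMap.ker (zmap N) →ₗ[ℂ] ℂ × ℂ :=
    ((EuclideanSpace.proj (Sum.inl j₀) : E N →L[ℂ] ℂ).toLinearMap.prod
      (EuclideanSpace.proj (Sum.inr j₀) : E N →L[ℂ] ℂ).toLinearMap).comp
      (LinearMap.ker (zmap N)).subtype
  have hinj : Function.Injective ev := by
    intro u v huv
    simp only [ev, LinearMap.comp_apply, LinearMap.prod_apply, Prod.ext_iff] at huv
    have hu := (mem_ker_zmap_iff _).1 u.2
    have hv := (mem_ker_zmap_iff _).1 v.2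
    refine Subtype.ext (PiLp.ext fun s => ?_)
    rcases s with j | j <;> rcases Nat.eq_zero_or_pos j with h0 | hpos
    · rw [show j = j₀ from Fin.ext h0]; exact huv.1
    · rw [(hu j hpos).1, (hv j hpos).1]
    · rw [show j = j₀ from Fin.ext h0]; exact huv.2
    · rw [(hu j hpos).2, (hv j hpos).2]
  have hsurj : Function.Surjective ev := by
    rintro ⟨x, y⟩
    refine ⟨⟨EuclideanSpace.single (Sum.inl j₀) x + EuclideanSpace.single (Sum.inr j₀) y,
      (mem_ker_zmap_iff _).2 fun j hj => ?_⟩, ?_⟩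
    · have : j ≠ j₀ := fun h => by simp [h, j₀] at hj
      simp [this]
    · simp [ev]
  rw [(LinearEquiv.ofBijective ev ⟨hinj, hsurj⟩).finrank_eq, finrank_prod, finrank_self]

theorem finrank_map_zmap_add_two {N : ℕ} (hN : 1 ≤ N) {V : Submodule ℂ (E N)}
    (hV : LinearMap.ker (zmap N) ≤ V) : finrank ℂ (V.map (zmap N)) + 2 = finrank ℂ V := by
  rw [← finrank_ker_zmap hN, Submodule.finrank_map_add_finrank_ker_of_ker_le _ hV]

def PairCondition (N m : ℕ) (L : Fin (m + 1) → Submodule ℂ (E N)) (p : ℕ × ℕ) : Prop :=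
  L (Fin.ofNat (m + 1) p.2) =
    (L (Fin.ofNat (m + 1) (p.1 - 1))).comap (zmap N ^ ((p.2 - p.1 + 1) / 2))

theorem KaSet_eq (N m : ℕ) (pairs : Finset (ℕ × ℕ)) :
    KaSet N m pairs = {L | L ∈ Ym N m ∧ ∀ p ∈ pairs, PairCondition N m L p} := rfl

def renumber (i k : ℕ) : ℕ := if i + 2 ≤ k then k - 2 else k

theorem Fin.ofNat_eq_mk {m k : ℕ} (hk : k ≤ m) : Fin.ofNat (m + 1) k = ⟨k, by omega⟩ :=
  Fin.ext (Nat.mod_eq_of_lt (by omega))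

section Flags

variable {N m i : ℕ} {L : Fin (m + 1) → Submodule ℂ (E N)}

theorem finrank_ofNat_of_mem_Ym (hL : L ∈ Ym N m) {k : ℕ} (hk : k ≤ m) :
    finrank ℂ (L (Fin.ofNat (m + 1) k)) = k := by
  rw [hL.2.2.1, Fin.ofNat_eq_mk hk]

theorem ofNat_mono_of_mem_Ym (hL : L ∈ Ym N m) {j k : ℕ} (hjk : j ≤ k) (hk : k ≤ m) :
    L (Fin.ofNat (m + 1) j) ≤ L (Fin.ofNat (m + 1) k) := by
  rw [Fin.ofNat_eq_mk (hjk.trans hk), Fin.ofNat_eq_mk hk]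
  exact hL.2.1.monotone (Fin.mk_le_mk.2 hjk)

theorem eq_comap_of_mem_Xmi (hX : L ∈ Xmi N m i) (him : i + 1 ≤ m) :
    L (Fin.ofNat (m + 1) (i + 1)) = (L (Fin.ofNat (m + 1) (i - 1))).comap (zmap N) := by
  rw [Fin.ofNat_eq_mk him, Fin.ofNat_eq_mk (by omega)]
  exact hX.2 _ _

theorem mem_Xmi_iff (him : i + 1 ≤ m) :
    L ∈ Xmi N m i ↔ L ∈ Ym N m ∧ PairCondition N m L (i, i + 1) := by
  rw [PairCondition, show (i + 1 - i + 1) / 2 = 1 by omega, pow_one]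
  refine ⟨fun hX => ⟨hX.1, eq_comap_of_mem_Xmi hX him⟩,
    fun ⟨hY, h⟩ => ⟨hY, fun _ _ => ?_⟩⟩
  rwa [Fin.ofNat_eq_mk him, Fin.ofNat_eq_mk (by omega)] at h

theorem ker_zmap_le_of_mem_Xmi (hX : L ∈ Xmi N m i) {k : ℕ} (hik : i + 1 ≤ k)
    (hkm : k ≤ m) :
    LinearMap.ker (zmap N) ≤ L (Fin.ofNat (m + 1) k) := by
  calc LinearMap.ker (zmap N) ≤ (L (Fin.ofNat (m + 1) (i - 1))).comap (zmap N) :=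
        LinearMap.ker_le_comap _
    _ = L (Fin.ofNat (m + 1) (i + 1)) := (eq_comap_of_mem_Xmi hX (hik.trans hkm)).symm
    _ ≤ L (Fin.ofNat (m + 1) k) := ofNat_mono_of_mem_Ym hX.1 hik hkm

theorem map_zmap_eq_of_mem_Xmi (hN : 1 ≤ N) (hX : L ∈ Xmi N m i) (hi : 1 ≤ i)
    (him : i + 1 ≤ m) :
    (L (Fin.ofNat (m + 1) (i + 1))).map (zmap N) = L (Fin.ofNat (m + 1) (i - 1)) := by
  have hdim : finrank ℂ (L (Fin.ofNat (m + 1) (i - 1))) +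
      (0 + 1) * finrank ℂ (LinearMap.ker (zmap N)) ≤
        finrank ℂ (L (Fin.ofNat (m + 1) (i + 1))) := by
    rw [finrank_ker_zmap hN, finrank_ofNat_of_mem_Ym hX.1 (by omega),
      finrank_ofNat_of_mem_Ym hX.1 him]
    omega
  have h := Submodule.eq_comap_pow_succ_iff_map_eq (ker_zmap_le_of_mem_Xmi hX le_rfl him) 0 hdim
  rw [zero_add, pow_one, pow_zero, Module.End.one_eq_id, Submodule.comap_id] at h
  exact h.1 (eq_comap_of_mem_Xmi hX him)

variable (hm : 2 ≤ m)

theorem qRaw_ofNat_of_lt {k : ℕ} (hki : k < i) (hkm : k ≤ m - 2) :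
    qRaw N m i hm L (Fin.ofNat (m - 2 + 1) k) = L (Fin.ofNat (m + 1) k) := by
  rw [Fin.ofNat_eq_mk hkm, Fin.ofNat_eq_mk (by omega), qRaw, if_pos hki]

theorem qRaw_ofNat_of_le {k : ℕ} (hik : i ≤ k) (hkm : k ≤ m - 2) :
    qRaw N m i hm L (Fin.ofNat (m - 2 + 1) k) = (L (Fin.ofNat (m + 1) (k + 2))).map (zmap N) := by
  rw [Fin.ofNat_eq_mk hkm, Fin.ofNat_eq_mk (by omega), qRaw, if_neg (by simp only; omega)]

theorem qRaw_ofNat_of_pred_le (hN : 1 ≤ N) (hX : L ∈ Xmi N m i) (hi : 1 ≤ i) {k : ℕ}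
    (hik : i - 1 ≤ k) (hkm : k ≤ m - 2) :
    qRaw N m i hm L (Fin.ofNat (m - 2 + 1) k) = (L (Fin.ofNat (m + 1) (k + 2))).map (zmap N) := by
  rcases (show k = i - 1 ∨ i ≤ k by omega) with rfl | hik
  · rw [qRaw_ofNat_of_lt hm (by omega) hkm, show i - 1 + 2 = i + 1 by omega,
      map_zmap_eq_of_mem_Xmi hN hX hi (by omega)]
  · exact qRaw_ofNat_of_le hm hik hkm

theorem finrank_qRaw_ofNat (hN : 1 ≤ N) (hX : L ∈ Xmi N m i) {k : ℕ} (hkm : k ≤ m - 2) :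
    finrank ℂ (qRaw N m i hm L (Fin.ofNat (m - 2 + 1) k)) = k := by
  rcases lt_or_ge k i with hki | hik
  · rw [qRaw_ofNat_of_lt hm hki hkm, finrank_ofNat_of_mem_Ym hX.1 (by omega)]
  · have h := finrank_map_zmap_add_two hN
      (ker_zmap_le_of_mem_Xmi hX (k := k + 2) (by omega) (by omega))
    rw [finrank_ofNat_of_mem_Ym hX.1 (by omega)] at h
    rw [qRaw_ofNat_of_le hm hik hkm]
    omega

theorem qRaw_ofNat_mono (hN : 1 ≤ N) (hX : L ∈ Xmi N m i) (hi : 1 ≤ i) {j k : ℕ}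
    (hjk : j ≤ k) (hkm : k ≤ m - 2) :
    qRaw N m i hm L (Fin.ofNat (m - 2 + 1) j) ≤ qRaw N m i hm L (Fin.ofNat (m - 2 + 1) k) := by
  have hL := hX.1
  rcases lt_or_ge k i with hki | hik
  · rw [qRaw_ofNat_of_lt hm (hjk.trans_lt hki) (by omega), qRaw_ofNat_of_lt hm hki hkm]
    exact ofNat_mono_of_mem_Ym hL hjk (by omega)
  rw [qRaw_ofNat_of_le hm hik hkm]
  rcases lt_or_ge j i with hji | hij
  · calc qRaw N m i hm L (Fin.ofNat (m - 2 + 1) j) = L (Fin.ofNat (m + 1) j) :=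
          qRaw_ofNat_of_lt hm hji (by omega)
      _ ≤ L (Fin.ofNat (m + 1) (i - 1)) := ofNat_mono_of_mem_Ym hL (by omega) (by omega)
      _ = (L (Fin.ofNat (m + 1) (i + 1))).map (zmap N) :=
          (map_zmap_eq_of_mem_Xmi hN hX hi (by omega)).symm
      _ ≤ (L (Fin.ofNat (m + 1) (k + 2))).map (zmap N) :=
          Submodule.map_mono (ofNat_mono_of_mem_Ym hL (by omega) (by omega))
  · rw [qRaw_ofNat_of_le hm hij (by omega)]
    exact Submodule.map_mono (ofNat_mono_of_mem_Ym hL (by omega) (by omega))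

theorem qRaw_mem_Ym (hN : 1 ≤ N) (hX : L ∈ Xmi N m i) (hi : 1 ≤ i) :
    qRaw N m i hm L ∈ Ym N (m - 2) := by
  have hofNat (j : Fin (m - 2 + 1)) : Fin.ofNat (m - 2 + 1) j = j := Fin.ofNat_val_eq_self j
  refine ⟨?_, fun j k hjk => ?_, fun j => ?_, fun j => ?_⟩
  · rw [← Fin.ofNat_val_eq_self 0, qRaw_ofNat_of_lt hm (by rw [Fin.val_zero]; omega) (by simp)]
    simpa using hX.1.1
  · rw [← hofNat j, ← hofNat k]
    refine Submodule.lt_of_le_of_finrank_lt_finrank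
      (qRaw_ofNat_mono hm hN hX hi hjk.le k.is_le) ?_
    rw [finrank_qRaw_ofNat hm hN hX j.is_le, finrank_qRaw_ofNat hm hN hX k.is_le]
    exact hjk
  · have h := finrank_qRaw_ofNat hm hN hX j.is_le
    rwa [hofNat] at h
  · rw [← hofNat j]
    rcases lt_or_ge (j : ℕ) i with hji | hij
    · rw [qRaw_ofNat_of_lt hm hji (by omega)]
      exact hX.1.2.2.2 _
    · rw [qRaw_ofNat_of_le hm hij (by omega)]
      exact Submodule.map_mono (hX.1.2.2.2 _)

theorem pairCondition_qRaw_iff (hN : 1 ≤ N) (hX : L ∈ Xmi N m i) (hi : 1 ≤ i)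
    (him : i + 1 ≤ m) {s t : ℕ} (hs : 1 ≤ s) (hst : s < t) (ht : t ≤ m)
    (hpos : t < i ∨ (s < i ∧ i + 1 < t) ∨ i + 1 < s) :
    PairCondition N (m - 2) (qRaw N m i hm L) (renumber i s, renumber i t) ↔
      PairCondition N m L (s, t) := by
  have hdim (d : ℕ) (hd : 2 * d ≤ t - s + 1) :
      finrank ℂ (L (Fin.ofNat (m + 1) (s - 1))) + d * finrank ℂ (LinearMap.ker (zmap N)) ≤
        finrank ℂ (L (Fin.ofNat (m + 1) t)) := by
    rw [finrank_ker_zmap hN, finrank_ofNat_of_mem_Ym hX.1 (by omega),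
      finrank_ofNat_of_mem_Ym hX.1 ht]
    omega
  simp only [PairCondition, renumber]
  rcases hpos with hti | ⟨hsi, hit⟩ | his
  · rw [if_neg (show ¬ i + 2 ≤ s by omega), if_neg (show ¬ i + 2 ≤ t by omega),
      qRaw_ofNat_of_lt hm (k := t) hti (by omega),
      qRaw_ofNat_of_lt hm (k := s - 1) (by omega) (by omega)]
  · rw [if_neg (show ¬ i + 2 ≤ s by omega), if_pos (show i + 2 ≤ t by omega),
      qRaw_ofNat_of_le hm (k := t - 2) (by omega) (by omega),
      qRaw_ofNat_of_lt hm (k := s - 1) (by omega) (by omega), show t - 2 + 2 = t by omega,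
      show (t - s + 1) / 2 = (t - 2 - s + 1) / 2 + 1 by omega]
    exact (Submodule.eq_comap_pow_succ_iff_map_eq (ker_zmap_le_of_mem_Xmi hX (by omega) ht) _
      (hdim _ (by omega))).symm
  · rw [if_pos (show i + 2 ≤ s by omega), if_pos (show i + 2 ≤ t by omega),
      qRaw_ofNat_of_le hm (k := t - 2) (by omega) (by omega),
      qRaw_ofNat_of_pred_le hm hN hX hi (k := s - 2 - 1) (by omega) (by omega),
      show t - 2 + 2 = t by omega, show s - 2 - 1 + 2 = s - 1 by omega,
      show t - 2 - (s - 2) + 1 = t - s + 1 by omega]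
    exact (Submodule.eq_comap_pow_iff_map_eq_comap_pow_map
      (ker_zmap_le_of_mem_Xmi hX (by omega) ht) (ker_zmap_le_of_mem_Xmi hX (by omega) (by omega)) _
      (hdim _ (by omega))).symm

end Flags

namespace CrossinglessMatching

variable {n : ℕ} (a : CrossinglessMatching n)

theorem eq_of_mem_of_endpoint {p q : ℕ × ℕ} (hp : p ∈ a.pairs) (hq : q ∈ a.pairs) {k : ℕ}
    (hkp : p.1 = k ∨ p.2 = k) (hkq : q.1 = k ∨ q.2 = k) : p = q := by
  have := a.lt p hp
  have := a.mem_range p hp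
  obtain ⟨r, -, hr⟩ := a.cover k (by omega) (by omega)
  exact (hr p ⟨hp, hkp⟩).trans (hr q ⟨hq, hkq⟩).symm

theorem position_of_ne {i : ℕ} (hi : (i, i + 1) ∈ a.pairs) {q : ℕ × ℕ} (hq : q ∈ a.pairs)
    (hne : q ≠ (i, i + 1)) : q.2 < i ∨ (q.1 < i ∧ i + 1 < q.2) ∨ i + 1 < q.1 := by
  have hfree (k : ℕ) (hk : k = i ∨ k = i + 1) : q.1 ≠ k ∧ q.2 ≠ k := by
    constructor <;> intro h <;>
      exact hne (a.eq_of_mem_of_endpoint hq hi (k := k) (by omega) (by omega))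
  have := a.lt q hq
  have := hfree i (Or.inl rfl)
  have := hfree (i + 1) (Or.inr rfl)
  omega

end CrossinglessMatching

theorem Ka_eq_q_preimage (N n i : ℕ) (hN : 2 * n ≤ N)
    (h1 : 1 ≤ i) (h2 : i ≤ 2 * n - 1)
    (a : CrossinglessMatching n) (hi : (i, i + 1) ∈ a.pairs)
    (a' : CrossinglessMatching (n - 1))
    (ha' : ∀ p : ℕ × ℕ, p ∈ a'.pairs ↔ ∃ q ∈ a.pairs, q ≠ (i, i + 1) ∧
      p.1 = (if i + 2 ≤ q.1 then q.1 - 2 else q.1) ∧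
      p.2 = (if i + 2 ≤ q.2 then q.2 - 2 else q.2)) :
    KaSet N (2 * n) a.pairs =
      {L | L ∈ Xmi N (2 * n) i ∧
        qRaw N (2 * n) i (by omega) L ∈ KaSet N (2 * n - 2) a'.pairs} := by
  have hN1 : 1 ≤ N := by omega
  have him : i + 1 ≤ 2 * n := by omega
  have key {L} (hX : L ∈ Xmi N (2 * n) i) {q} (hq : q ∈ a.pairs) (hne : q ≠ (i, i + 1)) :=
    pairCondition_qRaw_iff (by omega) hN1 hX h1 him (a.mem_range q hq).1 (a.lt q hq)
      (a.mem_range q hq).2 (a.position_of_ne hi hq hne)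
  ext L
  simp only [KaSet_eq, Set.mem_ofPred_eq]
  constructor
  · rintro ⟨hY, hK⟩
    have hX := (mem_Xmi_iff him).2 ⟨hY, hK _ hi⟩
    refine ⟨hX, qRaw_mem_Ym _ hN1 hX h1, fun p hp => ?_⟩
    obtain ⟨q, hq, hne, hp1, hp2⟩ := (ha' p).1 hp
    rw [show p = (renumber i q.1, renumber i q.2) from Prod.ext hp1 hp2]
    exact (key hX hq hne).2 (hK q hq)
  · rintro ⟨hX, -, hK'⟩
    refine ⟨hX.1, fun q hq => ?_⟩
    by_cases heq : q = (i, i + 1)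
    · exact heq ▸ ((mem_Xmi_iff him).1 hX).2
    · exact (key hX hq heq).1 (hK' _ ((ha' _).2 ⟨q, hq, heq, rfl, rfl⟩))
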